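/- arXiv:1906.06358 — 4 statements merged into one kernel-verified Lean document; each statement's English description precedes it below -/
import Mathlib

section
/- Let G be a simple graph and M a subgraph of G. Let G_M be the induced subgraph of G on V(M) ∪ W, where W is the set of vertices k of G such that for some edge ij of M, both ik and jk are edges of G. Then every clique of G is a clique of the graph G − M (G with the edges of M deleted) or a clique of G_M. -/
open SimpleGraph

/-- Let `M` be a subgraph of `G` and let `G_M` be the induced subgraph
of `G` on the vertices of `M` together with all vertices adjacent to both endpoints
of some edge of `M`.  Then every clique of `G` is a clique of `G − M` (the graph `G`
with the edges of `M` deleted) or a clique of `G_M`. -/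
theorem clique_cover_deleteEdges_edgeNbhd {V : Type*} (G : SimpleGraph V)
    (M : G.Subgraph) :
    ∀ s : Set V, G.IsClique s →
      s.Pairwise (fun a b => G.Adj a b ∧ ¬ M.Adj a b) ∨
      s ⊆ M.verts ∪ {k | ∃ i j, M.Adj i j ∧ G.Adj i k ∧ G.Adj j k} := by
  intro s hs
  by_cases h : ∃ a ∈ s, ∃ b ∈ s, M.Adj a b
  · right
    obtain ⟨a, ha, b, hb, hab⟩ := h
    intro k hk
    by_cases hka : k = a
    · exact Or.inl (hka ▸ hab.fst_mem)
    by_cases hkb : k = b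
    · exact Or.inl (hkb ▸ hab.snd_mem)
    · exact Or.inr ⟨a, b, hab, (hs ha hk (Ne.symm hka)), (hs hb hk (Ne.symm hkb))⟩
  · left
    push_neg at h
    intro a ha b hb hne
    exact ⟨hs ha hb hne, h a ha b hb⟩
end

section
/- Let G be a finite simple graph with no induced 4-cycle and no induced copy of F, where F is the 5-vertex graph consisting of an isolated vertex together with two triangles sharing an edge. If G is not complete, then G has a vertex v of minimal degree such that the open neighborhood of v induces a chordal graph. Consequently, every such graph has a vertex whose open neighborhood is chordal. -/
/-!
Let `v` have minimum degree. As `G` is not complete, `v` is not universal, so some `w ≠ v` is not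
adjacent to `v`. Since `G` has no induced `C₄`, the common neighbours of `v` and `w` form a clique;
since `G` has no induced `F`, `w` has a neighbour on every induced path `x - y - z` inside `N(v)`.
An induced cycle `C` of length `≥ 5` in `N(v)` is impossible: the neighbours of `w` on `C` form a
clique of `C`, hence lie on one edge of `C`, and the three vertices following that edge form an
induced path of `N(v)` avoiding `N(w)`. An induced `C₄` in `N(v)` is an induced `C₄` of `G`.
-/

open SimpleGraph

/-- The graph `F`: two triangles sharing the edge `12`, together with the isolated
vertex `4`. -/
def Fgraph : SimpleGraph (Fin 5) :=
  SimpleGraph.fromEdgeSet {s(0, 1), s(0, 2), s(1, 2), s(1, 3), s(2, 3)}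

theorem Fin.add_two_ne_self {n : ℕ} (i : Fin (n + 3)) : i + 2 ≠ i := by
  intro h
  have h' := congrArg (· - i) h
  simp only [add_sub_cancel_left, sub_self] at h'
  simp (disch := omega) [Fin.ext_iff, Nat.mod_eq_of_lt] at h'

namespace SimpleGraph

section CycleGraph

open Fin.CommRing

variable {n : ℕ}

theorem cycleGraph_adj_add_one (i : Fin (n + 2)) : (cycleGraph (n + 2)).Adj i (i + 1) := by
  simp [cycleGraph_adj]

theorem cycleGraph_adj_add_one_add_two (i : Fin (n + 2)) :
    (cycleGraph (n + 2)).Adj (i + 1) (i + 2) := by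
  rw [cycleGraph_adj]
  right
  ring

theorem cycleGraph_not_adj_add_two (i : Fin (n + 4)) : ¬(cycleGraph (n + 4)).Adj i (i + 2) := by
  rw [cycleGraph_adj, sub_eq_iff_eq_add', sub_eq_iff_eq_add']
  rintro (h | h) <;> have h' := congrArg (· - i) h <;> ring_nf at h' <;>
    simp (disch := omega) [Fin.ext_iff, Nat.mod_eq_of_lt] at h'

theorem cycleGraph.exists_subset_pair_of_isClique {S : Set (Fin (n + 4))}
    (hS : (cycleGraph (n + 4)).IsClique S) : ∃ a, S ⊆ {a, a + 1} := by
  rcases S.eq_empty_or_nonempty with rfl | ⟨b, hb⟩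
  · exact ⟨0, Set.empty_subset _⟩
  have hnbr : ∀ s ∈ S, s = b ∨ s = b - 1 ∨ s = b + 1 := fun s hs => by
    by_cases hsb : s = b
    · exact Or.inl hsb
    · have : s ∈ (cycleGraph (n + 4)).neighborSet b := hS hb hs (Ne.symm hsb)
      rw [cycleGraph_neighborSet] at this
      exact Or.inr this
  by_cases hb' : b - 1 ∈ S
  · refine ⟨b - 1, fun s hs => ?_⟩
    rcases hnbr s hs with rfl | rfl | rfl
    · exact Or.inr (sub_add_cancel _ _).symm
    · exact Or.inl rfl
    · have h2 : b - 1 + 2 = b + 1 := by ring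
      have hadj := hS hb' hs (h2 ▸ (Fin.add_two_ne_self (b - 1)).symm)
      exact absurd (h2 ▸ hadj) (cycleGraph_not_adj_add_two (b - 1))
  · refine ⟨b, fun s hs => ?_⟩
    rcases hnbr s hs with rfl | rfl | rfl
    · exact Or.inl rfl
    · exact absurd hs hb'
    · exact Or.inr rfl

theorem cycleGraph.exists_three_consecutive_notMem_of_isClique {S : Set (Fin (n + 5))}
    (hS : (cycleGraph (n + 5)).IsClique S) : ∃ i, i ∉ S ∧ i + 1 ∉ S ∧ i + 2 ∉ S := by
  obtain ⟨a, ha⟩ := cycleGraph.exists_subset_pair_of_isClique (n := n + 1) hS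
  -- each case is an equation `a + k = a + l` with `k ≠ l` below `n + 5`
  refine ⟨a + 2, ?_, ?_, ?_⟩ <;> intro h <;> rcases ha h with h | h <;>
    have h' := congrArg (· - a) h <;> ring_nf at h' <;>
    simp (disch := omega) [Fin.ext_iff, Nat.mod_eq_of_lt] at h'

end CycleGraph

variable {V : Type*} {G : SimpleGraph V}

theorem not_isUniversal_of_degree_le [Fintype V] [DecidableRel G.Adj] {v x : V}
    (hx : ¬G.IsUniversal x) (hvx : G.degree v ≤ G.degree x) : ¬G.IsUniversal v := by
  rw [← degree_lt_card_sub_one] at hx ⊢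
  omega

theorem isClique_commonNeighbors_of_isEmpty_cycleGraph_four (hC4 : IsEmpty (cycleGraph 4 ↪g G))
    {v w : V} (hvw : v ≠ w) (hnadj : ¬G.Adj v w) : G.IsClique (G.commonNeighbors v w) := by
  rintro x ⟨hvx, hwx⟩ y ⟨hvy, hwy⟩ hxy
  by_contra hnxy
  have hinj : Function.Injective ![v, x, w, y] := by
    intro a b hab
    fin_cases a <;> fin_cases b <;> simp_all [G.ne_of_adj]
  refine hC4.false ⟨⟨_, hinj⟩, fun {a b} => ?_⟩
  fin_cases a <;> fin_cases b <;> simp_all [G.adj_comm] <;> decide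

theorem adj_of_isEmpty_Fgraph_embedding (hF : IsEmpty (Fgraph ↪g G)) {v w x y z : V}
    (hvw : v ≠ w) (hnadj : ¬G.Adj v w) (hvx : G.Adj v x) (hvy : G.Adj v y) (hvz : G.Adj v z)
    (hxy : G.Adj x y) (hyz : G.Adj y z) (hxz : x ≠ z) (hnxz : ¬G.Adj x z) :
    G.Adj w x ∨ G.Adj w y ∨ G.Adj w z := by
  by_contra! ⟨hwx, hwy, hwz⟩
  have hinj : Function.Injective ![x, v, y, z, w] := by
    intro a b hab
    fin_cases a <;> fin_cases b <;> simp_all [G.ne_of_adj]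
  refine hF.false ⟨⟨_, hinj⟩, fun {a b} => ?_⟩
  fin_cases a <;> fin_cases b <;> simp_all [G.adj_comm, Fgraph]

theorem isEmpty_cycleGraph_embedding_induce_neighborSet (hC4 : IsEmpty (cycleGraph 4 ↪g G))
    (hF : IsEmpty (Fgraph ↪g G)) {v : V} (hv : ¬G.IsUniversal v) {n : ℕ} (hn : 4 ≤ n) :
    IsEmpty (cycleGraph n ↪g G.induce (G.neighborSet v)) := by
  obtain ⟨w, hvw, hnadj⟩ : ∃ w, v ≠ w ∧ ¬G.Adj v w := by simpa [IsUniversal] using hv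
  refine ⟨fun f => ?_⟩
  let g : cycleGraph n ↪g G := (Embedding.induce _).comp f
  have hvg : ∀ i, G.Adj v (g i) := fun i => (f i).2
  obtain rfl | hlt := hn.eq_or_lt
  · exact hC4.false g
  obtain ⟨m, rfl⟩ : ∃ m, n = m + 5 := ⟨n - 5, by omega⟩
  have hS : (cycleGraph (m + 5)).IsClique {i | G.Adj w (g i)} := fun i hi j hj hij =>
    g.map_adj_iff.1 <| isClique_commonNeighbors_of_isEmpty_cycleGraph_four hC4 hvw hnadj
      ⟨hvg i, hi⟩ ⟨hvg j, hj⟩ (g.injective.ne hij)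
  obtain ⟨i, hi, hi₁, hi₂⟩ := cycleGraph.exists_three_consecutive_notMem_of_isClique hS
  have hpath₁ := g.map_adj_iff.2 (cycleGraph_adj_add_one i)
  have hpath₂ := g.map_adj_iff.2 (cycleGraph_adj_add_one_add_two i)
  have hnpath := mt g.map_adj_iff.1 (cycleGraph_not_adj_add_two i)
  have hne := g.injective.ne (Fin.add_two_ne_self i).symm
  rcases adj_of_isEmpty_Fgraph_embedding hF hvw hnadj (hvg _) (hvg _) (hvg _) hpath₁ hpath₂ hne
    hnpath with h | h | h
  exacts [hi h, hi₁ h, hi₂ h]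

end SimpleGraph

theorem exists_minDegree_vertex_chordal_neighborhood_general {V : Type*} [Fintype V]
    (G : SimpleGraph V) [DecidableRel G.Adj]
    (hC4 : IsEmpty (cycleGraph 4 ↪g G))
    (hF : IsEmpty (Fgraph ↪g G))
    (hnc : G ≠ ⊤) :
    ∃ v : V, (∀ u : V, G.degree v ≤ G.degree u) ∧
      ∀ n : ℕ, 4 ≤ n → IsEmpty (cycleGraph n ↪g G.induce (G.neighborSet v)) := by
  obtain ⟨x, hx⟩ : ∃ x, ¬G.IsUniversal x := by
    simpa [eq_top_iff_forall_isUniversal] using hnc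
  have : Nonempty V := ⟨x⟩
  obtain ⟨v, hv⟩ := G.exists_minimal_degree_vertex
  have hmin : ∀ u, G.degree v ≤ G.degree u := fun u => hv ▸ G.minDegree_le_degree u
  exact ⟨v, hmin, fun n hn => isEmpty_cycleGraph_embedding_induce_neighborSet hC4 hF
    (not_isUniversal_of_degree_le hx (hmin x)) hn⟩

/-- If a finite graph `G` has no induced 4-cycle and no induced copy of
`F`, and `G` is not complete, then `G` has a vertex of minimal degree whose open
neighborhood induces a chordal graph; in particular some vertex has a chordal
neighborhood. -/
theorem exists_minDegree_vertex_chordal_neighborhood {V : Type*} [Fintype V]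
    [DecidableEq V] (G : SimpleGraph V) [DecidableRel G.Adj]
    (hC4 : IsEmpty (cycleGraph 4 ↪g G))
    (hF : IsEmpty (Fgraph ↪g G))
    (hnc : G ≠ ⊤) :
    ∃ v : V, (∀ u : V, G.degree v ≤ G.degree u) ∧
      ∀ n : ℕ, 4 ≤ n → IsEmpty (cycleGraph n ↪g G.induce (G.neighborSet v)) :=
  exists_minDegree_vertex_chordal_neighborhood_general G hC4 hF hnc
end

section
/- Let G be a finite simple graph, v a vertex of minimal degree in G, and suppose G contains an induced cycle C of length m ≥ 5 inside the closed neighborhood of v, with some vertex w of G not adjacent to v. If G has no induced 4-cycle, then w is adjacent to at most two vertices of C, and any two neighbors of w on C are adjacent on C (consecutive). -/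
/-!
A neighbour of `w` on the cycle is also a neighbour of `v`, since it is either `v` itself or lies
in `N(v)`, and `w ≁ v`. Two non-adjacent such neighbours would therefore form, with `v` and `w`,
an induced 4-cycle. So the neighbours of `w` on the cycle are pairwise adjacent on the cycle, and
a cycle of length at least 4 contains no triangle.
-/

open SimpleGraph

namespace SimpleGraph

theorem cycleGraph_adj_val {m : ℕ} {u v : Fin m} (h : (cycleGraph m).Adj u v) :
    u.val + 1 = v.val ∨ v.val + 1 = u.val ∨ (u.val + 1 = m ∧ v.val = 0) ∨
      (v.val + 1 = m ∧ u.val = 0) := by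
  have sub_val_eq_one {a b : Fin m} (hab : (a - b).val = 1) :
      a.val = b.val + 1 ∨ (b.val + 1 = m ∧ a.val = 0) := by
    rcases le_or_gt b a with hba | hab'
    · rw [Fin.coe_sub_iff_le.mpr hba] at hab
      omega
    · rw [Fin.coe_sub_iff_lt.mpr hab'] at hab
      omega
  rcases cycleGraph_adj'.mp h with h | h
  · rcases sub_val_eq_one h with h | h <;> omega
  · rcases sub_val_eq_one h with h | h <;> omega

theorem cycleGraph_cliqueFree_three {m : ℕ} (hm : 4 ≤ m) : (cycleGraph m).CliqueFree 3 := by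
  intro s hs
  obtain ⟨a, b, c, hab, hac, hbc, -⟩ := is3Clique_iff.mp hs
  have hab' : a.val ≠ b.val := Fin.val_ne_of_ne hab.ne
  have hac' : a.val ≠ c.val := Fin.val_ne_of_ne hac.ne
  have hbc' : b.val ≠ c.val := Fin.val_ne_of_ne hbc.ne
  have := cycleGraph_adj_val hab
  have := cycleGraph_adj_val hac
  have := cycleGraph_adj_val hbc
  omega

theorem ncard_le_two_of_cliqueFree_three {α : Type*} {G : SimpleGraph α} (hG : G.CliqueFree 3)
    {s : Set α} (hs : G.IsClique s) : s.ncard ≤ 2 := by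
  by_contra! hlt
  obtain ⟨a, ha, b, hb, c, hc, hab, hac, hbc⟩ :=
    (Set.two_lt_ncard (Set.finite_of_ncard_pos (by omega))).mp hlt
  classical
  exact hG {a, b, c} (is3Clique_triple_iff.mpr ⟨hs ha hb hab, hs ha hc hac, hs hb hc hbc⟩)

theorem nonempty_cycleGraph_four_embedding {V : Type*} {G : SimpleGraph V} {a b c d : V}
    (hab : G.Adj a b) (hbc : G.Adj b c) (hcd : G.Adj c d) (hda : G.Adj d a)
    (hac : a ≠ c) (hbd : b ≠ d) (hnac : ¬G.Adj a c) (hnbd : ¬G.Adj b d) :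
    Nonempty (cycleGraph 4 ↪g G) := by
  refine ⟨⟨⟨![a, b, c, d], ?_⟩, ?_⟩⟩
  · intro i j hij
    fin_cases i <;> fin_cases j <;>
      simp_all [hab.ne, hbc.ne, hcd.ne, hda.ne, hab.ne', hbc.ne', hcd.ne', hda.ne', hac.symm,
        hbd.symm]
  · intro i j
    show G.Adj (![a, b, c, d] i) (![a, b, c, d] j) ↔ _
    fin_cases i <;> fin_cases j <;>
      simp +decide [hab, hbc, hcd, hda, hab.symm, hbc.symm, hcd.symm, hda.symm, hnac, hnbd,
        G.adj_comm c a, G.adj_comm d b]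

theorem adj_of_mem_commonNeighbors_of_isEmpty_cycleGraph_four_embedding {V : Type*}
    {G : SimpleGraph V} (hG : IsEmpty (cycleGraph 4 ↪g G)) {a c b d : V} (hac : a ≠ c)
    (hnac : ¬G.Adj a c) (hb : b ∈ G.commonNeighbors a c) (hd : d ∈ G.commonNeighbors a c)
    (hbd : b ≠ d) : G.Adj b d := by
  by_contra hnbd
  exact hG.elim
    (nonempty_cycleGraph_four_embedding hb.1 hb.2.symm hd.2 hd.1.symm hac hbd hnac hnbd).some

end SimpleGraph

theorem outside_vertex_sees_at_most_two_general {V : Type*}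
    (G : SimpleGraph V) (v w : V) (m : ℕ) (hm : 5 ≤ m)
    (f : cycleGraph m ↪g G)
    (hin : ∀ i : Fin m, f i = v ∨ G.Adj v (f i))
    (hwv : w ≠ v) (hnadj : ¬ G.Adj v w)
    (hC4 : IsEmpty (cycleGraph 4 ↪g G)) :
    {i : Fin m | G.Adj w (f i)}.ncard ≤ 2 ∧
      ∀ i j : Fin m, G.Adj w (f i) → G.Adj w (f j) → i ≠ j →
        (cycleGraph m).Adj i j := by
  have hv_of_hw (i : Fin m) (hi : G.Adj w (f i)) : G.Adj v (f i) :=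
    (hin i).resolve_left fun hfi => hnadj (hfi ▸ hi).symm
  have hconsecutive (i j : Fin m) (hi : G.Adj w (f i)) (hj : G.Adj w (f j)) (hij : i ≠ j) :
      (cycleGraph m).Adj i j :=
    f.map_adj_iff.mp <| adj_of_mem_commonNeighbors_of_isEmpty_cycleGraph_four_embedding hC4
      hwv.symm hnadj ⟨hv_of_hw i hi, hi⟩ ⟨hv_of_hw j hj, hj⟩ (f.injective.ne hij)
  exact ⟨ncard_le_two_of_cliqueFree_three (cycleGraph_cliqueFree_three (by omega))
    fun i hi j hj => hconsecutive i j hi hj, hconsecutive⟩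

/-- Let `v` have minimal degree in `G`, let `f` be an induced cycle of
length `m ≥ 5` lying inside the closed neighborhood of `v`, and let `w` be a vertex
not adjacent to `v` (and distinct from `v`).  If `G` has no induced 4-cycle, then `w`
is adjacent to at most two vertices of the cycle, and any two of its neighbors on the
cycle are consecutive on the cycle. -/
theorem outside_vertex_sees_at_most_two {V : Type*} [Fintype V] [DecidableEq V]
    (G : SimpleGraph V) [DecidableRel G.Adj] (v w : V) (m : ℕ) (hm : 5 ≤ m)
    (hmin : ∀ u : V, G.degree v ≤ G.degree u)
    (f : cycleGraph m ↪g G)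
    (hin : ∀ i : Fin m, f i = v ∨ G.Adj v (f i))
    (hwv : w ≠ v) (hnadj : ¬ G.Adj v w)
    (hC4 : IsEmpty (cycleGraph 4 ↪g G)) :
    {i : Fin m | G.Adj w (f i)}.ncard ≤ 2 ∧
      ∀ i j : Fin m, G.Adj w (f i) → G.Adj w (f j) → i ≠ j →
        (cycleGraph m).Adj i j :=
  outside_vertex_sees_at_most_two_general G v w m hm f hin hwv hnadj hC4
end

section
/- Let B be a chordal bipartite graph (a bipartite graph with no induced cycle of length greater than 4) with bipartition X, Y, and let e = ij be a bisimplicial edge of B (i ∈ X, j ∈ Y, and the induced subgraph on N_B(i) ∪ N_B(j) is a complete bipartite graph). Then B − e (B with edge e deleted) is again chordal bipartite. -/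
/-!
An induced cycle of `B − ij` that misses `i` or `j` is an induced cycle of `B`. If it passes
through both, say `i = f a` and `j = f b`, then the successors of `a` and `b` on the cycle are sent
to neighbours of `i` and `j`; bisimpliciality makes these adjacent in `B`, and since that edge is
not `ij` it survives in `B − ij`. The cycle is induced, so the successors of `a` and `b` are
adjacent, and rotating back, so are `a` and `b`: that is, `ij` would be an edge of `B − ij`.
-/

open SimpleGraph

namespace SimpleGraph

variable {V W : Type*} {G : SimpleGraph W} {B : SimpleGraph V}

def Embedding.ofDeleteEdges {s : Set (Sym2 V)} (f : G ↪g B.deleteEdges s)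
    (hs : ∀ x y, s(f x, f y) ∉ s) : G ↪g B where
  toEmbedding := f.toEmbedding
  map_rel_iff' {x y} := by
    rw [← f.map_adj_iff, deleteEdges_adj]
    exact ⟨fun h => ⟨h, hs x y⟩, And.left⟩

def cycleGraph.rotation (n : ℕ) : cycleGraph (n + 2) ≃g cycleGraph (n + 2) where
  toEquiv := Equiv.addRight 1
  map_rel_iff' {_ _} := by
    simp only [Equiv.coe_addRight, cycleGraph_adj, add_sub_add_right_eq_sub]

theorem cycleGraph.adj_rotation {n : ℕ} (x : Fin (n + 2)) :
    (cycleGraph (n + 2)).Adj x (cycleGraph.rotation n x) := by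
  simp [cycleGraph.rotation, cycleGraph_adj]

theorem Embedding.notMem_range_or_notMem_range_of_bisimplicial (σ : G ≃g G)
    (hσ : ∀ x, G.Adj x (σ x)) {i j : V} (hij : i ≠ j)
    (hbisimp : ∀ a b, B.Adj i a → B.Adj j b → a ≠ b → B.Adj a b)
    (f : G ↪g B.deleteEdges {s(i, j)}) : i ∉ Set.range f ∨ j ∉ Set.range f := by
  by_contra! ⟨⟨a, ha⟩, ⟨b, hb⟩⟩
  have hab : a ≠ b := by rintro rfl; exact hij (ha.symm.trans hb)
  have hnadj : ¬ G.Adj a b := fun h => by simpa [ha, hb] using f.map_adj_iff.mpr h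
  have hσa : B.Adj i (f (σ a)) := by
    simpa only [ha] using (f.map_adj_iff.mpr (hσ a)).1
  have hσb : B.Adj j (f (σ b)) := by
    simpa only [hb] using (f.map_adj_iff.mpr (hσ b)).1
  have hB := hbisimp _ _ hσa hσb (f.injective.ne (σ.injective.ne hab))
  have hσab : s(f (σ a), f (σ b)) ∉ ({s(i, j)} : Set (Sym2 V)) := by
    simp only [← ha, ← hb, Set.mem_singleton_iff, Sym2.eq_iff, f.injective.eq_iff, not_or,
      not_and]
    exact ⟨fun h => absurd h (hσ a).ne', fun h => absurd (h ▸ hσ a) hnadj⟩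
  exact hnadj (σ.map_adj_iff.mp (f.map_adj_iff.mp ((deleteEdges_adj ..).mpr ⟨hB, hσab⟩)))

end SimpleGraph

theorem deleting_bisimplicial_edge_preserves_chordal_bipartite_general {V : Type*}
    (B : SimpleGraph V)
    (hcb : ∀ n : ℕ, 5 ≤ n → IsEmpty (cycleGraph n ↪g B))
    (i j : V) (hij : B.Adj i j)
    (hbisimp : ∀ a b : V, B.Adj i a → B.Adj j b → a ≠ b → B.Adj a b) :
    ∀ n : ℕ, 5 ≤ n → IsEmpty (cycleGraph n ↪g B.deleteEdges {s(i, j)}) := by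
  intro n hn
  obtain ⟨m, rfl⟩ : ∃ m, n = m + 2 := ⟨n - 2, by omega⟩
  refine ⟨fun f => (hcb _ hn).false (f.ofDeleteEdges fun x y hxy => ?_)⟩
  have hmiss := f.notMem_range_or_notMem_range_of_bisimplicial (cycleGraph.rotation m)
    cycleGraph.adj_rotation hij.ne hbisimp
  rw [Set.mem_singleton_iff, Sym2.eq_iff] at hxy
  grind

/-- Let `B` be a chordal bipartite graph (bipartite with no induced
cycle of length greater than four) with bipartition `X`, `Xᶜ`, and let `ij` be a
bisimplicial edge (`i ∈ X`, `j ∉ X`, and every neighbor of `i` is adjacent to every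
neighbor of `j`).  Then `B − e` is again chordal bipartite. -/
theorem deleting_bisimplicial_edge_preserves_chordal_bipartite {V : Type*}
    (B : SimpleGraph V) (X : Set V)
    (hbip : ∀ u v : V, B.Adj u v → (u ∈ X ↔ v ∉ X))
    (hcb : ∀ n : ℕ, 5 ≤ n → IsEmpty (cycleGraph n ↪g B))
    (i j : V) (hi : i ∈ X) (hj : j ∉ X) (hij : B.Adj i j)
    (hbisimp : ∀ a b : V, B.Adj i a → B.Adj j b → a ≠ b → B.Adj a b) :
    ∀ n : ℕ, 5 ≤ n → IsEmpty (cycleGraph n ↪g B.deleteEdges {s(i, j)}) :=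
  deleting_bisimplicial_edge_preserves_chordal_bipartite_general B hcb i j hij hbisimp
end
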